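/- arXiv:2101.07247 — 2 statements merged into one kernel-verified Lean document; each statement's English description precedes it below -/
import Mathlib

section
/- In the graph G obtained from the infinite binary tree T₂ by adding, for each rooted ray R ⊆ T₂, a new ray R′ (pairwise disjoint for distinct rooted rays) whose first vertex v_{R′} is joined to all vertices of R, the two rays R′ and v_{R′}R are directional, and the ends represented by R and by R′ are distinct ends of G. -/
/-! Common definitions: rays, ends (à la Halin), the end space, directions
(via Mathlib's `SimpleGraph.end`), domination, generalised paths, etc. -/

open Classical SimpleGraph

universe u

variable {V : Type u}

/-- A ray in `G`: a one-way infinite path. -/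
structure Ray (G : SimpleGraph V) where
  f : ℕ → V
  inj : Function.Injective f
  adj : ∀ n, G.Adj (f n) (f (n + 1))

namespace Ray

variable {G : SimpleGraph V}

/-- `R` has a tail inside the vertex set `S`. -/
def TailIn (R : Ray G) (S : Set V) : Prop :=
  ∃ N, ∀ n, N ≤ n → R.f n ∈ S

/-- The set of the first `n` vertices of `R`. -/
noncomputable def initSeg (R : Ray G) (n : ℕ) : Finset V :=
  (Finset.range n).image R.f

end Ray

/-- Two rays are equivalent if no finite vertex set separates them, i.e. for
every finite `X` they have tails in a common component of `G - X`. -/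
def RayEquiv (G : SimpleGraph V) (R S : Ray G) : Prop :=
  ∀ X : Finset V, ∃ C : G.ComponentCompl (X : Set V), R.TailIn C ∧ S.TailIn C

/-- The ends of `G` in the sense of Halin: equivalence classes of rays. -/
def Ends (G : SimpleGraph V) : Type u :=
  { ω : Set (Ray G) // ∃ R : Ray G, ω = { S | RayEquiv G R S } }

/-- The end of a ray. -/
def Ray.end (G : SimpleGraph V) (R : Ray G) : Ends G :=
  ⟨{ S | RayEquiv G R S }, R, rfl⟩

/-- The end `ω` lives in the component `C` of `G - X`:  every ray in `ω` has a
tail in `C`.  (For genuine ends this is the statement `C = C(X,ω)`.) -/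
def LivesIn {G : SimpleGraph V} (ω : Ends G) (X : Finset V)
    (C : G.ComponentCompl (X : Set V)) : Prop :=
  ∀ R ∈ ω.1, R.TailIn C

/-- The basic open set `Ω(X,C)` of the end space. -/
def basicSet (G : SimpleGraph V) (X : Finset V) (C : G.ComponentCompl (X : Set V)) :
    Set (Ends G) :=
  { ω | LivesIn ω X C }

/-- The end space: the topology on `Ends G` generated by the sets `Ω(X,C)`. -/
instance endsTopology (G : SimpleGraph V) : TopologicalSpace (Ends G) :=
  TopologicalSpace.generateFrom
    { U | ∃ (X : Finset V) (C : G.ComponentCompl (X : Set V)), U = basicSet G X C }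

section Directions

/-- The component `f(X)` chosen by the direction `f` at the finite vertex set `X`. -/
def dirComp {G : SimpleGraph V} (f : G.end) (X : Finset V) : G.ComponentCompl (X : Set V) :=
  f.1 (Opposite.op X)


variable (G : SimpleGraph V)

/-- The ray `R` induces the direction `f` (i.e. `f = f_ω` for the end `ω` of `R`):
for every finite `X`, the component `f(X)` contains a tail of `R`. -/
def InducesDir {G : SimpleGraph V} (R : Ray G) (f : G.end) : Prop :=
  ∀ X : Finset V, R.TailIn (dirComp f X : Set V)

/-- The end `ω` induces the direction `f`, i.e. `f = f_ω`. -/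
def EndInducesDir {G : SimpleGraph V} (ω : Ends G) (f : G.end) : Prop :=
  ∀ (X : Finset V), ∀ R ∈ ω.1, R.TailIn (dirComp f X : Set V)

/-- A direction `f` is countably determined in `G` if some countable set of
directional choices `(X, C)` distinguishes `f` from every other direction. -/
def DirCountablyDetermined {G : SimpleGraph V} (f : G.end) : Prop :=
  ∃ D : Set ((X : Finset V) × G.ComponentCompl (X : Set V)), D.Countable ∧
    ∀ h : G.end, h ≠ f → ∃ p ∈ D,
      dirComp f p.1 = p.2 ∧ dirComp h p.1 ≠ p.2

/-- `G` is countably determined: some countable set of directional choices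
distinguishes every two distinct directions of `G` from each other. -/
def GraphCountablyDetermined (G : SimpleGraph V) : Prop :=
  ∃ D : Set ((X : Finset V) × G.ComponentCompl (X : Set V)), D.Countable ∧
    ∀ f h : G.end, f ≠ h → ∃ p ∈ D,
      (dirComp f p.1 = p.2 ∧ dirComp h p.1 ≠ p.2) ∨
      (dirComp h p.1 = p.2 ∧ dirComp f p.1 ≠ p.2)

/-- `R` is directional in `G`: the directional choices given by the finite
initial segments of `R` distinguish the direction induced by `R` from every
other direction of `G`. -/
def Directional {G : SimpleGraph V} (R : Ray G) : Prop :=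
  ∀ h : G.end, (∃ X : Finset V, ¬ R.TailIn (dirComp h X : Set V)) →
    ∃ n : ℕ, ¬ R.TailIn (dirComp h (R.initSeg n) : Set V)

/-- `R` is topological in `G`: the basic open sets `Ω(X_n, ω)`, for `X_n` the
first `n` vertices of `R` and `ω` the end of `R`, form a neighbourhood base at
`ω` in the end space of `G`. -/
def Topological {G : SimpleGraph V} (R : Ray G) : Prop :=
  ∀ U : Set (Ends G), IsOpen U → R.end G ∈ U →
    ∃ (n : ℕ) (C : G.ComponentCompl (R.initSeg n : Set V)),
      LivesIn (R.end G) (R.initSeg n) C ∧ basicSet G (R.initSeg n) C ⊆ U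

end Directions

section Domination

variable (G : SimpleGraph V)

/-- `v` dominates the ray `R`: no finite vertex set avoiding `v` separates `v`
from `R` (equivalently, there is an infinite `v`–`R` fan). -/
def DominatesRay (v : V) (R : Ray G) : Prop :=
  ∀ X : Finset V, v ∉ X → ∃ (u : V) (W : G.Walk v u),
    (∃ n, R.f n = u) ∧ ∀ w ∈ W.support, w ∉ (X : Set V)

/-- `v` dominates the end `ω`. -/
def DominatesEnd (v : V) (ω : Ends G) : Prop :=
  ∀ R ∈ ω.1, DominatesRay G v R

end Domination

/-- A double ray in `G`. -/
structure DoubleRay (G : SimpleGraph V) where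
  f : ℤ → V
  inj : Function.Injective f
  adj : ∀ n : ℤ, G.Adj (f n) (f (n + 1))

namespace DoubleRay

variable {G : SimpleGraph V}

/-- The positive tail of `D` lies in the end `ω`. -/
def PosTailIn (D : DoubleRay G) (ω : Ends G) : Prop :=
  ∃ R ∈ ω.1, ∃ N : ℤ, ∀ n : ℕ, R.f n = D.f (N + n)

/-- The negative tail of `D` lies in the end `ω`. -/
def NegTailIn (D : DoubleRay G) (ω : Ends G) : Prop :=
  ∃ R ∈ ω.1, ∃ N : ℤ, ∀ n : ℕ, R.f n = D.f (N - n)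

end DoubleRay

/-- `P` is (the vertex set of) a generalised path in `G` with endpoints
`ω₁ ≠ ω₂`. -/
def IsGenPath (G : SimpleGraph V) (P : Set V) (ω₁ ω₂ : Ends G) : Prop :=
  (∃ D : DoubleRay G, P = Set.range D.f ∧
    ((D.PosTailIn ω₁ ∧ D.NegTailIn ω₂) ∨ (D.PosTailIn ω₂ ∧ D.NegTailIn ω₁))) ∨
  (∃ (u v : V) (W : G.Walk u v), W.IsPath ∧ P = { x | x ∈ W.support } ∧
    ((DominatesEnd G u ω₁ ∧ DominatesEnd G v ω₂) ∨
     (DominatesEnd G u ω₂ ∧ DominatesEnd G v ω₁))) ∨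
  (∃ R : Ray G, P = Set.range R.f ∧
    ((R ∈ ω₁.1 ∧ DominatesEnd G (R.f 0) ω₂) ∨
     (R ∈ ω₂.1 ∧ DominatesEnd G (R.f 0) ω₁)))

/-- A sun in `G` centred at `ω`: pairwise vertex-disjoint generalised paths
`(P i, {ω, leaf i})` with pairwise distinct leaves `leaf i ≠ ω`, where either
all the `P i` are double rays with one tail in `leaf i` and another in `ω`, or
all the `P i` are rays in `leaf i` whose first vertices dominate `ω`. -/
def IsSun (G : SimpleGraph V) (ω : Ends G) {I : Type*}
    (P : I → Set V) (leaf : I → Ends G) : Prop :=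
  (∀ i j, i ≠ j → Disjoint (P i) (P j)) ∧ Function.Injective leaf ∧
  (∀ i, leaf i ≠ ω) ∧
  ((∀ i, ∃ D : DoubleRay G, P i = Set.range D.f ∧
      ((D.PosTailIn (leaf i) ∧ D.NegTailIn ω) ∨
       (D.PosTailIn ω ∧ D.NegTailIn (leaf i)))) ∨
   (∀ i, ∃ R : Ray G, P i = Set.range R.f ∧ R ∈ (leaf i).1 ∧
      DominatesEnd G (R.f 0) ω))


/-- The first `n` values of `σ` as a list: the `n`-th vertex of the rooted ray
of the binary tree corresponding to `σ`. -/
def pre2 (σ : ℕ → Bool) : ℕ → List Bool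
  | 0 => []
  | n + 1 => pre2 σ n ++ [σ n]

lemma pre2_length (σ : ℕ → Bool) (n : ℕ) : (pre2 σ n).length = n := by
  induction n with
  | zero => rfl
  | succ n ih => simp [pre2, ih]

/-- Vertices: the binary tree `T₂` (finite 0-1 sequences) together with, for
every rooted ray `σ` of `T₂`, the vertices `(σ, n)` of the new ray `R'_σ`. -/
abbrev BTV : Type := List Bool ⊕ ((ℕ → Bool) × ℕ)

/-- Edges: tree edges of `T₂`; ray edges of each `R'_σ`; and the first vertex
`(σ, 0)` of `R'_σ` joined to every vertex of the rooted ray `R_σ`. -/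
def btRel : BTV → BTV → Prop := fun x y =>
  (∃ (s : List Bool) (b : Bool), x = Sum.inl s ∧ y = Sum.inl (s ++ [b])) ∨
  (∃ (σ : ℕ → Bool) (n : ℕ), x = Sum.inr (σ, n) ∧ y = Sum.inr (σ, n + 1)) ∨
  (∃ (σ : ℕ → Bool) (n : ℕ), x = Sum.inr (σ, 0) ∧ y = Sum.inl (pre2 σ n))

/-- The graph of Example 4.1. -/
def GBT : SimpleGraph BTV := SimpleGraph.fromRel btRel

/-- The rooted ray `R_σ` of `T₂` inside `GBT`. -/
def rayR (σ : ℕ → Bool) : Ray GBT where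
  f n := Sum.inl (pre2 σ n)
  inj := by
    intro a b h
    have := congrArg (fun x : BTV => (Sum.elim List.length (fun _ => 0)) x) h
    simpa [pre2_length] using this
  adj n := (SimpleGraph.fromRel_adj btRel _ _).mpr
    ⟨by
      intro h
      have := congrArg (fun x : BTV => (Sum.elim List.length (fun _ => 0)) x) h
      simp [pre2_length] at this,
     Or.inl (Or.inl ⟨pre2 σ n, σ n, rfl, rfl⟩)⟩

/-- The new ray `R'_σ` of `GBT`. -/
def rayR' (σ : ℕ → Bool) : Ray GBT where
  f n := Sum.inr (σ, n)
  inj := by intro a b h; simpa using h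
  adj n := (SimpleGraph.fromRel_adj btRel _ _).mpr
    ⟨by simp, Or.inl (Or.inr (Or.inl ⟨σ, n, rfl, rfl⟩))⟩

/-- The underlying function of the ray `v_{R'_σ} R_σ`. -/
def vrFun (σ : ℕ → Bool) : ℕ → BTV
  | 0 => Sum.inr (σ, 0)
  | n + 1 => Sum.inl (pre2 σ n)

/-- The ray `v_{R'_σ} R_σ` of `GBT`: it starts at the first vertex of `R'_σ`
and then follows the rooted ray `R_σ` from the root. -/
def rayVR (σ : ℕ → Bool) : Ray GBT where
  f := vrFun σ
  inj := by
    intro a b h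
    match a, b with
    | 0, 0 => rfl
    | 0, n + 1 => simp [vrFun] at h
    | m + 1, 0 => simp [vrFun] at h
    | m + 1, n + 1 =>
      simp only [vrFun, Sum.inl.injEq] at h
      have := congrArg List.length h
      simp [pre2_length] at this
      omega
  adj n := by
    match n with
    | 0 =>
      exact (SimpleGraph.fromRel_adj btRel _ _).mpr
        ⟨by simp [vrFun], Or.inl (Or.inr (Or.inr ⟨σ, 0, rfl, rfl⟩))⟩
    | m + 1 =>
      refine (SimpleGraph.fromRel_adj btRel _ _).mpr ⟨?_, ?_⟩
      · simp only [vrFun, ne_eq, Sum.inl.injEq]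
        intro h
        have := congrArg List.length h
        simp [pre2_length] at this
      · exact Or.inl (Or.inl ⟨pre2 σ m, σ m, rfl, rfl⟩)


/-!
Let `f` be a direction such that `f(X)` contains no tail of the ray `R`, and let `R_n` be the set
of the first `n` vertices of `R`. If `f(R_n)` contained a tail of `R`, we find a finite
`Y ⊇ X ∪ R_n` such that `f(Y)` contains a tail of `R`; but `f(Y) ⊆ f(X)`.

For `R'_σ` and `n = 1`: the component of `G - v_{R'_σ}` containing a tail of `R'_σ` is
`R'_σ - v_{R'_σ}` (which also separates the ends of `R_σ` and `R'_σ`), so the nonempty set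
`f(Y) ⊆ f(R_1)` consists of vertices of `R'_σ`; if `Y` contains every vertex of `R'_σ` up to the
last one in `X`, then `f(Y)` contains a tail of `R'_σ`.

For `v_{R'_σ} R_σ` and `n = N + 1`, the role of `R'_σ - v_{R'_σ}` is played by the cone above the
tree vertex `pre2 σ N`: the subtree of `T₂` above it together with the rays `R'_τ`, `τ ≠ σ`,
attached to it. No edge leaves the cone outside `R_n`, the cone is connected, and for large `N`
it misses `X`, because the tree vertices in `X` are short and every `R'_τ` meeting `X` branches
off `R_σ` early. So `f(X ∪ R_n) ⊆ f(R_n)` meets the cone, hence contains it, and with it a tail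
of `R_σ`.
-/

namespace SimpleGraph.ComponentCompl

variable {G : SimpleGraph V} {K : Set V}

theorem mem_iff_of_adj {C : G.ComponentCompl K} {u v : V} (hu : u ∉ K) (hv : v ∉ K)
    (huv : G.Adj u v) : u ∈ C ↔ v ∈ C :=
  ⟨fun h => mem_of_adj u v h hv huv, fun h => mem_of_adj v u h hu huv.symm⟩

theorem coe_subset_of_adj_closed {S : Set V}
    (hS : ∀ u v, u ∈ S → v ∉ K → G.Adj u v → v ∈ S) {C : G.ComponentCompl K} {u : V}
    (hu : u ∈ C) (huS : u ∈ S) : (C : Set V) ⊆ S := by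
  let P : G.ComponentCompl K → Prop := ComponentCompl.lift (fun v _ => v ∈ S)
    fun v w hv hw hvw => propext ⟨fun h => hS v w h hw hvw, fun h => hS w v h hv hvw.symm⟩
  obtain ⟨huK, rfl⟩ := hu
  rintro w ⟨hwK, hw⟩
  have hPw : P (G.componentComplMk hwK) = (w ∈ S) := rfl
  have hPu : P (G.componentComplMk huK) = (u ∈ S) := rfl
  rw [hw, hPu] at hPw
  exact hPw ▸ huS

end SimpleGraph.ComponentCompl

theorem dirComp_anti {G : SimpleGraph V} (f : G.end) {X Y : Finset V} (hXY : X ⊆ Y) :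
    (dirComp f Y : Set V) ⊆ (dirComp f X : Set V) := by
  have h := f.2 (CategoryTheory.opHomOfLE hXY)
  rw [show dirComp f X = (dirComp f Y).hom (by exact_mod_cast hXY) from h.symm]
  exact SimpleGraph.ComponentCompl.subset_hom _ _

namespace Ray

variable {G : SimpleGraph V} (R : Ray G)

theorem TailIn.mono {R : Ray G} {S T : Set V} (h : R.TailIn S) (hST : S ⊆ T) : R.TailIn T :=
  let ⟨N, hN⟩ := h
  ⟨N, fun n hn => hST (hN n hn)⟩

theorem mem_initSeg {n : ℕ} {x : V} : x ∈ R.initSeg n ↔ ∃ k < n, R.f k = x := by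
  simp [initSeg]

theorem apply_mem_initSeg {n k : ℕ} : R.f k ∈ R.initSeg n ↔ k < n := by
  simp [initSeg, R.inj.eq_iff]

theorem initSeg_mono : Monotone R.initSeg :=
  fun _ _ h => Finset.image_subset_image (Finset.range_subset_range.2 h)

theorem exists_forall_ge_notMem (X : Finset V) : ∃ N, ∀ k, N ≤ k → R.f k ∉ X := by
  obtain ⟨N, hN⟩ := (X.finite_toSet.preimage R.inj.injOn).bddAbove
  exact ⟨N + 1, fun k hk hkX => absurd (hN hkX) (by omega)⟩

theorem apply_mem_componentCompl_iff {K : Set V} (C : G.ComponentCompl K) {a b : ℕ} (hab : a ≤ b)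
    (hK : ∀ j, a ≤ j → j ≤ b → R.f j ∉ K) : R.f a ∈ C ↔ R.f b ∈ C := by
  induction b, hab using Nat.le_induction with
  | base => rfl
  | succ b hab ih =>
    rw [ih fun j hj hjb => hK j hj (by omega)]
    exact ComponentCompl.mem_iff_of_adj (hK b hab (by omega)) (hK (b + 1) (by omega) le_rfl)
      (R.adj b)

theorem tailIn_of_mem {K : Set V} {C : G.ComponentCompl K} {m : ℕ} (hm : R.f m ∈ C)
    (hK : ∀ k, m ≤ k → R.f k ∉ K) : R.TailIn C :=
  ⟨m, fun _ hk => (R.apply_mem_componentCompl_iff C hk fun j hj _ => hK j hj).1 hm⟩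

theorem tailIn_dirComp_of_mem [DecidableEq V] (f : G.end) {X : Finset V} {N m : ℕ}
    (hN : ∀ k, N ≤ k → R.f k ∉ X) (hm : R.f m ∈ dirComp f (X ∪ R.initSeg N)) :
    R.TailIn (dirComp f X : Set V) := by
  have hmN : N ≤ m := by
    have := ComponentCompl.notMem_of_mem hm
    simp only [Finset.coe_union, Set.mem_union, Finset.mem_coe, apply_mem_initSeg] at this
    omega
  refine (R.tailIn_of_mem hm fun k hk => ?_).mono (dirComp_anti f Finset.subset_union_left)
  simp only [Finset.coe_union, Set.mem_union, Finset.mem_coe, apply_mem_initSeg, not_or]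
  exact ⟨hN k (by omega), by omega⟩

end Ray

theorem pre2_eq_map (σ : ℕ → Bool) (n : ℕ) : pre2 σ n = (List.range n).map σ := by
  induction n with
  | zero => rfl
  | succ n ih => simp [pre2, ih, List.range_succ]

theorem pre2_eq_pre2_iff {σ τ : ℕ → Bool} {n : ℕ} :
    pre2 τ n = pre2 σ n ↔ ∀ k < n, τ k = σ k := by
  simp [pre2_eq_map, List.map_inj_left]

theorem take_pre2 (σ : ℕ → Bool) (k n : ℕ) : (pre2 σ n).take k = pre2 σ (min k n) := by
  rw [pre2_eq_map, pre2_eq_map, ← List.map_take, List.take_range]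

theorem prefix_pre2_iff {σ : ℕ → Bool} {s : List Bool} {n : ℕ} :
    s <+: pre2 σ n ↔ ∃ k ≤ n, s = pre2 σ k := by
  constructor
  · intro h
    have hlen : s.length ≤ n := pre2_length σ n ▸ h.length_le
    refine ⟨s.length, hlen, ?_⟩
    exact (List.prefix_iff_eq_take.1 h).trans (by rw [take_pre2, min_eq_left hlen])
  · rintro ⟨k, hk, rfl⟩
    rw [List.prefix_iff_eq_take, pre2_length, take_pre2, min_eq_left hk]

theorem pre2_prefix_pre2_iff {σ τ : ℕ → Bool} {N n : ℕ} :
    pre2 σ N <+: pre2 τ n ↔ N ≤ n ∧ pre2 τ N = pre2 σ N := by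
  constructor
  · intro h
    obtain ⟨k, hk, hNk⟩ := prefix_pre2_iff.1 h
    obtain rfl : N = k := by simpa [pre2_length] using congrArg List.length hNk
    exact ⟨hk, hNk.symm⟩
  · rintro ⟨hN, h⟩
    exact h ▸ prefix_pre2_iff.2 ⟨N, hN, rfl⟩

theorem exists_eq_pre2 (s : List Bool) : ∃ σ, s = pre2 σ s.length := by
  refine ⟨fun i => s.getD i false, List.ext_getElem (by simp [pre2_length]) fun i hi _ => ?_⟩
  simp [pre2_eq_map, List.getElem?_eq_getElem hi]

namespace GBT

theorem adj_inr_cases {σ : ℕ → Bool} {m : ℕ} {y : BTV} (h : GBT.Adj (Sum.inr (σ, m)) y) :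
    y = Sum.inr (σ, m + 1) ∨ (∃ k, m = k + 1 ∧ y = Sum.inr (σ, k)) ∨
      (m = 0 ∧ ∃ n, y = Sum.inl (pre2 σ n)) := by
  rw [GBT, SimpleGraph.fromRel_adj] at h
  obtain ⟨-, h | h⟩ := h <;>
    rcases h with ⟨s, b, hx, hy⟩ | ⟨τ, n, hx, hy⟩ | ⟨τ, n, hx, hy⟩
  · exact absurd hx (by simp)
  · obtain ⟨rfl, rfl⟩ : τ = σ ∧ n = m := by simpa [Prod.ext_iff, eq_comm] using hx.symm
    exact Or.inl hy
  · obtain ⟨rfl, rfl⟩ : σ = τ ∧ m = 0 := by simpa [Prod.ext_iff] using hx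
    exact Or.inr (Or.inr ⟨rfl, n, hy⟩)
  · exact absurd hy (by simp)
  · obtain ⟨rfl, rfl⟩ : σ = τ ∧ m = n + 1 := by simpa [Prod.ext_iff] using hy
    exact Or.inr (Or.inl ⟨n, rfl, hx⟩)
  · exact absurd hy (by simp)

theorem adj_inl_cases {s : List Bool} {y : BTV} (h : GBT.Adj (Sum.inl s) y) :
    (∃ b, y = Sum.inl (s ++ [b])) ∨ (∃ t b, s = t ++ [b] ∧ y = Sum.inl t) ∨
      (∃ τ n, s = pre2 τ n ∧ y = Sum.inr (τ, 0)) := by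
  rw [GBT, SimpleGraph.fromRel_adj] at h
  obtain ⟨-, h | h⟩ := h <;>
    rcases h with ⟨t, b, hx, hy⟩ | ⟨τ, n, hx, hy⟩ | ⟨τ, n, hx, hy⟩
  · obtain rfl : t = s := by simpa [eq_comm] using hx
    exact Or.inl ⟨b, hy⟩
  · exact absurd hx (by simp)
  · exact absurd hx (by simp)
  · obtain rfl : s = t ++ [b] := by simpa [eq_comm] using hy
    exact Or.inr (Or.inl ⟨t, b, rfl, hx⟩)
  · exact absurd hy (by simp)
  · obtain rfl : s = pre2 τ n := by simpa [eq_comm] using hy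
    exact Or.inr (Or.inr ⟨τ, n, rfl, hx⟩)

theorem adj_root_pre2 (σ : ℕ → Bool) (n : ℕ) : GBT.Adj (Sum.inr (σ, 0)) (Sum.inl (pre2 σ n)) :=
  (SimpleGraph.fromRel_adj btRel _ _).2 ⟨by simp, Or.inl (Or.inr (Or.inr ⟨σ, n, rfl, rfl⟩))⟩

def rayTail (σ : ℕ → Bool) : Set BTV :=
  {x | ∃ m, 0 < m ∧ x = Sum.inr (σ, m)}

theorem rayTail_adj_closed (σ : ℕ → Bool) {K : Set BTV} (hK : Sum.inr (σ, 0) ∈ K) :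
    ∀ u v, u ∈ rayTail σ → v ∉ K → GBT.Adj u v → v ∈ rayTail σ := by
  rintro u v ⟨m, hm, rfl⟩ hv huv
  rcases adj_inr_cases huv with rfl | ⟨k, rfl, rfl⟩ | ⟨rfl, -⟩
  · exact ⟨m + 1, by omega, rfl⟩
  · refine ⟨k, Nat.pos_of_ne_zero ?_, rfl⟩
    rintro rfl
    exact hv hK
  · omega

def cone (σ : ℕ → Bool) (N : ℕ) : Set BTV :=
  {x | (∃ s, x = Sum.inl s ∧ pre2 σ N <+: s) ∨
    (∃ τ m, x = Sum.inr (τ, m) ∧ τ ≠ σ ∧ pre2 τ N = pre2 σ N)}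

theorem pre2_mem_cone {σ τ : ℕ → Bool} {N n : ℕ} (hn : N ≤ n) (hτ : pre2 τ N = pre2 σ N) :
    Sum.inl (pre2 τ n) ∈ cone σ N :=
  Or.inl ⟨_, rfl, pre2_prefix_pre2_iff.2 ⟨hn, hτ⟩⟩

theorem cone_anti (σ : ℕ → Bool) {N N' : ℕ} (h : N ≤ N') : cone σ N' ⊆ cone σ N := by
  rintro x (⟨s, rfl, hs⟩ | ⟨τ, m, rfl, hτ, hτN⟩)
  · exact Or.inl ⟨s, rfl, (pre2_prefix_pre2_iff.2 ⟨h, rfl⟩).trans hs⟩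
  · refine Or.inr ⟨τ, m, rfl, hτ, pre2_eq_pre2_iff.2 fun k hk => ?_⟩
    exact pre2_eq_pre2_iff.1 hτN k (by omega)

theorem exists_notMem_cone (σ : ℕ → Bool) (x : BTV) : ∃ N, x ∉ cone σ N := by
  rcases x with s | ⟨τ, m⟩
  · refine ⟨s.length + 1, ?_⟩
    rintro (⟨s, h, hs⟩ | ⟨τ, m, h, -⟩)
    · cases h
      have := hs.length_le
      rw [pre2_length] at this
      omega
    · cases h
  · by_cases hτ : τ = σ
    · refine ⟨0, ?_⟩
      rintro (⟨s, h, -⟩ | ⟨τ', m', h, hτ', -⟩)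
      · cases h
      · cases h
        exact hτ' hτ
    · obtain ⟨j, hj⟩ := Function.ne_iff.1 hτ
      refine ⟨j + 1, ?_⟩
      rintro (⟨s, h, -⟩ | ⟨τ', m', h, -, hagree⟩)
      · cases h
      · cases h
        exact hj (pre2_eq_pre2_iff.1 hagree j (by omega))

theorem exists_forall_notMem_cone (σ : ℕ → Bool) (X : Finset BTV) :
    ∃ N, ∀ x ∈ X, x ∉ cone σ N := by
  choose n hn using exists_notMem_cone σ
  exact ⟨X.sup n, fun x hx hxN => hn x (cone_anti σ (Finset.le_sup hx) hxN)⟩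

theorem cone_adj_closed (σ : ℕ → Bool) (N : ℕ) {K : Set BTV} (hK₀ : Sum.inr (σ, 0) ∈ K)
    (hK : ∀ k < N, Sum.inl (pre2 σ k) ∈ K) :
    ∀ u v, u ∈ cone σ N → v ∉ K → GBT.Adj u v → v ∈ cone σ N := by
  rintro u v (⟨s, rfl, hs⟩ | ⟨τ, m, rfl, hτ, hτN⟩) hv huv
  · rcases adj_inl_cases huv with ⟨b, rfl⟩ | ⟨t, b, rfl, rfl⟩ | ⟨τ, n, rfl, rfl⟩
    · exact Or.inl ⟨_, rfl, hs.trans (List.prefix_append _ _)⟩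
    · rcases List.prefix_concat_iff.1 hs with hst | hst
      · obtain ⟨k, -, rfl⟩ := prefix_pre2_iff.1 (hst ▸ List.prefix_append t [b])
        have hkN : N = k + 1 := by simpa [pre2_length] using congrArg List.length hst
        exact absurd (hK k (by omega)) hv
      · exact Or.inl ⟨t, rfl, hst⟩
    · refine Or.inr ⟨τ, 0, rfl, ?_, (pre2_prefix_pre2_iff.1 hs).2⟩
      rintro rfl
      exact hv hK₀
  · rcases adj_inr_cases huv with rfl | ⟨k, rfl, rfl⟩ | ⟨rfl, n, rfl⟩
    · exact Or.inr ⟨τ, m + 1, rfl, hτ, hτN⟩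
    · exact Or.inr ⟨τ, k, rfl, hτ, hτN⟩
    · rcases le_or_gt N n with hn | hn
      · exact pre2_mem_cone hn hτN
      · have hτn : pre2 τ n = pre2 σ n :=
          pre2_eq_pre2_iff.2 fun k hk => pre2_eq_pre2_iff.1 hτN k (by omega)
        exact absurd (hτn ▸ hK n hn) hv

theorem pre2_mem_of_mem_cone {σ : ℕ → Bool} {N : ℕ} {K : Set BTV} {C : GBT.ComponentCompl K}
    (hK : ∀ x ∈ cone σ N, x ∉ K) {x : BTV} (hx : x ∈ cone σ N) (hxC : x ∈ C) :
    Sum.inl (pre2 σ N) ∈ C := by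
  rcases hx with ⟨s, rfl, hs⟩ | ⟨τ, m, rfl, hτ, hτN⟩
  · obtain ⟨τ, hsτ⟩ := exists_eq_pre2 s
    rw [hsτ] at hs hxC
    obtain ⟨hN, hτN⟩ := pre2_prefix_pre2_iff.1 hs
    rw [← hτN]
    exact ((rayR τ).apply_mem_componentCompl_iff C hN
      fun j hj _ => hK _ (pre2_mem_cone hj hτN)).2 hxC
  · have h₀ : Sum.inr (τ, 0) ∈ C := ((rayR' τ).apply_mem_componentCompl_iff C (Nat.zero_le m)
      fun j _ _ => hK _ (Or.inr ⟨τ, j, rfl, hτ, hτN⟩)).2 hxC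
    rw [← hτN]
    exact ComponentCompl.mem_of_adj _ _ h₀ (hK _ (pre2_mem_cone le_rfl hτN)) (adj_root_pre2 τ N)

theorem rayVR_apply_mem_cone_iff (σ : ℕ → Bool) {N j : ℕ} :
    (rayVR σ).f j ∈ cone σ N ↔ N < j := by
  cases j with
  | zero =>
    refine iff_of_false ?_ (Nat.not_lt_zero N)
    rintro (⟨s, h, -⟩ | ⟨τ, m, h, hτ, -⟩)
    · cases h
    · cases h
      exact hτ rfl
  | succ j =>
    refine ⟨?_, fun h => pre2_mem_cone (by omega) rfl⟩
    rintro (⟨s, h, hs⟩ | ⟨τ, m, h, -⟩)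
    · cases h
      exact Nat.lt_succ_of_le (pre2_prefix_pre2_iff.1 hs).1
    · cases h

end GBT

open GBT

theorem directional_rayR' (σ : ℕ → Bool) : Directional (rayR' σ) := by
  rintro f ⟨X, hX⟩
  refine ⟨1, fun ⟨M, hM⟩ => hX ?_⟩
  have hsub : (dirComp f ((rayR' σ).initSeg 1) : Set BTV) ⊆ rayTail σ :=
    ComponentCompl.coe_subset_of_adj_closed
      (rayTail_adj_closed σ ((rayR' σ).apply_mem_initSeg.2 Nat.one_pos))
      (hM (M + 1) (by omega)) ⟨M + 1, by omega, rfl⟩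
  obtain ⟨N, hN⟩ := (rayR' σ).exists_forall_ge_notMem X
  obtain ⟨v, hv⟩ := (dirComp f (X ∪ (rayR' σ).initSeg (N + 1))).nonempty
  have hinit : (rayR' σ).initSeg 1 ⊆ X ∪ (rayR' σ).initSeg (N + 1) :=
    (Ray.initSeg_mono _ (by omega)).trans Finset.subset_union_right
  obtain ⟨m, -, rfl⟩ := hsub (dirComp_anti f hinit hv)
  exact (rayR' σ).tailIn_dirComp_of_mem f (N := N + 1) (m := m) (fun k hk => hN k (by omega))
    (SetLike.mem_coe.1 hv)

theorem directional_rayVR (σ : ℕ → Bool) : Directional (rayVR σ) := by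
  rintro f ⟨X, hX⟩
  obtain ⟨N, hN⟩ := exists_forall_notMem_cone σ X
  refine ⟨N + 1, fun ⟨M, hM⟩ => hX ?_⟩
  set K := (rayVR σ).initSeg (N + 1)
  have hsub : (dirComp f K : Set BTV) ⊆ cone σ N :=
    ComponentCompl.coe_subset_of_adj_closed
      (cone_adj_closed σ N ((rayVR σ).apply_mem_initSeg (k := 0).2 (by omega))
        fun k hk => (rayVR σ).apply_mem_initSeg (k := k + 1).2 (by omega))
      (hM (M + N + 1) (by omega)) ((rayVR_apply_mem_cone_iff σ).2 (by omega))
  have hcone : ∀ x ∈ cone σ N, x ∉ ((X ∪ K : Finset BTV) : Set BTV) := by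
    rintro x hx hxXK
    rcases Finset.mem_union.1 hxXK with hxX | hxK
    · exact hN x hxX hx
    · obtain ⟨j, hj, rfl⟩ := (rayVR σ).mem_initSeg.1 hxK
      exact absurd ((rayVR_apply_mem_cone_iff σ).1 hx) (by omega)
  obtain ⟨v, hv⟩ := (dirComp f (X ∪ K)).nonempty
  have hapex := pre2_mem_of_mem_cone hcone (hsub (dirComp_anti f Finset.subset_union_right hv)) hv
  exact (rayVR σ).tailIn_dirComp_of_mem f (N := N + 1) (m := N + 1)
    (fun k hk hkX => hN _ hkX ((rayVR_apply_mem_cone_iff σ).2 hk)) hapex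

theorem not_rayEquiv_rayR_rayR' (σ : ℕ → Bool) : ¬ RayEquiv GBT (rayR σ) (rayR' σ) := by
  intro h
  obtain ⟨C, ⟨M, hM⟩, ⟨M', hM'⟩⟩ := h {Sum.inr (σ, 0)}
  obtain ⟨m, -, hm⟩ := ComponentCompl.coe_subset_of_adj_closed (rayTail_adj_closed σ (by simp))
    (hM' (M' + 1) (by omega)) ⟨M' + 1, by omega, rfl⟩ (hM M le_rfl)
  cases hm

/-- In `GBT`, for every rooted ray `R_σ` of `T₂` the two rays `R'_σ` and
`v_{R'_σ} R_σ` are directional, and the ends represented by `R_σ` and by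
`R'_σ` are distinct ends of `GBT`. -/
theorem stmt_12 (σ : ℕ → Bool) :
    Directional (rayR' σ) ∧ Directional (rayVR σ) ∧
    ¬ RayEquiv GBT (rayR σ) (rayR' σ) :=
  ⟨directional_rayR' σ, directional_rayVR σ, not_rayEquiv_rayR_rayR' σ⟩
end

section
/- For every connected graph G, the space |G| = G ∪ Ω(G) with the topology MTop is second countable if and only if the vertex set V(G) is countable. -/
/-! Common definitions: rays, ends (à la Halin), the end space, directions
(via Mathlib's `SimpleGraph.end`), domination, generalised paths, etc. -/

open Classical SimpleGraph

universe u

variable {V : Type u}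

/-- The points of the space `|G|` before identification: vertices, interior
points of (directed) edges, and ends. -/
inductive MPt (G : SimpleGraph V) : Type u
  | vtx : V → MPt G
  | edge : G.Dart → { t : ℝ // 0 < t ∧ t < 1 } → MPt G
  | ends : Ends G → MPt G

/-- Identify the two parametrisations of each edge. -/
inductive MRel (G : SimpleGraph V) : MPt G → MPt G → Prop
  | flip (d : G.Dart) (t : ℝ) (h : 0 < t ∧ t < 1) (h' : 0 < 1 - t ∧ 1 - t < 1) :
      MRel G (MPt.edge d ⟨t, h⟩) (MPt.edge d.symm ⟨1 - t, h'⟩)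

/-- The point set of `|G| = G ∪ Ω(G)`, with `G` the metric length-space. -/
def MSpace (G : SimpleGraph V) : Type u := Quot (MRel G)

/-- An open segment of an edge. -/
def mSeg (G : SimpleGraph V) (d : G.Dart) (a b : ℝ) : Set (MSpace G) :=
  { x | ∃ (t : ℝ) (h : 0 < t ∧ t < 1), a < t ∧ t < b ∧
      x = Quot.mk _ (MPt.edge d ⟨t, h⟩) }

/-- The open star of radius `ε` around the vertex `v`. -/
def mStar (G : SimpleGraph V) (v : V) (ε : ℝ) : Set (MSpace G) :=
  insert (Quot.mk _ (MPt.vtx v))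
    { x | ∃ (d : G.Dart) (t : ℝ) (h : 0 < t ∧ t < 1), d.toProd.1 = v ∧ t < ε ∧
        x = Quot.mk _ (MPt.edge d ⟨t, h⟩) }

/-- The basic open neighbourhood `Ĉ_ε(X,ω)` of an end: the ends and the
vertices in `C = C(X,ω)` together with the open ball of radius `ε` around `C`
in the length-space `G`. -/
def mEndNbhd (G : SimpleGraph V) (X : Finset V)
    (C : G.ComponentCompl (X : Set V)) (ε : ℝ) : Set (MSpace G) :=
  { x | ∃ ω : Ends G, LivesIn ω X C ∧ x = Quot.mk _ (MPt.ends ω) } ∪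
  { x | ∃ v ∈ (C : Set V), x = Quot.mk _ (MPt.vtx v) } ∪
  { x | ∃ (d : G.Dart) (t : ℝ) (h : 0 < t ∧ t < 1),
      d.toProd.1 ∈ (C : Set V) ∧ (d.toProd.2 ∈ (C : Set V) ∨ t < ε) ∧
      x = Quot.mk _ (MPt.edge d ⟨t, h⟩) }

/-- The topology MTop on `|G|`. -/
instance mTop (G : SimpleGraph V) : TopologicalSpace (MSpace G) :=
  TopologicalSpace.generateFrom
    ({ U | ∃ (d : G.Dart) (a b : ℝ), U = mSeg G d a b } ∪
     { U | ∃ (v : V) (ε : ℝ), 0 < ε ∧ U = mStar G v ε } ∪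
     { U | ∃ (X : Finset V) (C : G.ComponentCompl (X : Set V)) (ε : ℝ),
         0 < ε ∧ U = mEndNbhd G X C ε })

/-- The neighbourhood `N(C)` of a vertex set `C` in `G`. -/
def nbhdOf (G : SimpleGraph V) (C : Set V) : Set V :=
  { v | v ∉ C ∧ ∃ u ∈ C, G.Adj u v }


/-! A vertex's open star of radius `1/2` consists of the points whose nearest vertex it is, so
the stars around distinct vertices are disjoint open sets; in a second countable space only
countably many of them fit. Conversely, every basic open set of MTop is a union of basic open
sets whose real parameters are rational, and for countable `V` there are only countably many
of those. -/

open TopologicalSpace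

variable {G : SimpleGraph V}

noncomputable def MPt.nearestVertex : MPt G → Option V
  | .vtx v => some v
  | .edge d t =>
    if (t : ℝ) < 1 / 2 then some d.fst else if 1 / 2 < (t : ℝ) then some d.snd else none
  | .ends _ => none

lemma MPt.nearestVertex_eq_of_rel {a b : MPt G} (h : MRel G a b) :
    a.nearestVertex = b.nearestVertex := by
  obtain ⟨d, t, -, -⟩ := h
  simp only [MPt.nearestVertex]
  rcases lt_trichotomy t (1 / 2) with ht | rfl | ht
  · rw [if_pos ht, if_neg (by linarith), if_pos (by linarith)]
    rfl
  · norm_num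
  · rw [if_neg (by linarith), if_pos ht, if_pos (by linarith)]
    rfl

namespace MSpace

noncomputable def nearestVertex : MSpace G → Option V :=
  Quot.lift MPt.nearestVertex fun _ _ => MPt.nearestVertex_eq_of_rel

lemma nearestVertex_of_mem_mStar {v : V} {ε : ℝ} (hε : ε ≤ 1 / 2) {x : MSpace G}
    (hx : x ∈ mStar G v ε) : nearestVertex x = some v := by
  rcases hx with rfl | ⟨d, t, ht, rfl, htε, rfl⟩
  · rfl
  · show (if t < 1 / 2 then _ else _) = _
    rw [if_pos (htε.trans_le hε)]

lemma pairwise_disjoint_mStar_half :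
    Pairwise fun u v : V => Disjoint (mStar G u (1 / 2)) (mStar G v (1 / 2)) :=
  fun _ _ huv => Set.disjoint_left.2 fun _ hu hv => huv <| Option.some_injective _ <|
    (nearestVertex_of_mem_mStar le_rfl hu).symm.trans (nearestVertex_of_mem_mStar le_rfl hv)

lemma isOpen_mSeg (d : G.Dart) (a b : ℝ) : IsOpen (mSeg G d a b) :=
  .basic _ (.inl (.inl ⟨d, a, b, rfl⟩))

lemma isOpen_mStar (v : V) {ε : ℝ} (hε : 0 < ε) : IsOpen (mStar G v ε) :=
  .basic _ (.inl (.inr ⟨v, ε, hε, rfl⟩))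

lemma isOpen_mEndNbhd (X : Finset V) (C : G.ComponentCompl (X : Set V)) {ε : ℝ} (hε : 0 < ε) :
    IsOpen (mEndNbhd G X C ε) :=
  .basic _ (.inr ⟨X, C, ε, hε, rfl⟩)

theorem countable_of_secondCountableTopology [SecondCountableTopology (MSpace G)] :
    Countable V :=
  Pairwise.countable_of_isOpen_disjoint (s := (mStar G · (1 / 2)))
    pairwise_disjoint_mStar_half (fun v => isOpen_mStar v one_half_pos)
    fun _ => ⟨_, Set.mem_insert _ _⟩

lemma mSeg_subset_mSeg (d : G.Dart) {a a' b b' : ℝ} (ha : a ≤ a') (hb : b' ≤ b) :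
    mSeg G d a' b' ⊆ mSeg G d a b := by
  rintro _ ⟨t, ht, hat, htb, rfl⟩
  exact ⟨t, ht, ha.trans_lt hat, htb.trans_le hb, rfl⟩

lemma mStar_mono (v : V) : Monotone (mStar G v) := by
  rintro ε ε' h _ (rfl | ⟨d, t, ht, hd, htε, rfl⟩)
  · exact Set.mem_insert _ _
  · exact .inr ⟨d, t, ht, hd, htε.trans_le h, rfl⟩

lemma mEndNbhd_mono (X : Finset V) (C : G.ComponentCompl (X : Set V)) :
    Monotone (mEndNbhd G X C) := by
  rintro ε ε' h _ ((hx | hx) | ⟨d, t, ht, h₁, h₂, rfl⟩)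
  · exact .inl (.inl hx)
  · exact .inl (.inr hx)
  · exact .inr ⟨d, t, ht, h₁, h₂.imp_right (·.trans_le h), rfl⟩

lemma exists_rat_mem_mSeg {d : G.Dart} {a b : ℝ} {x : MSpace G} (hx : x ∈ mSeg G d a b) :
    ∃ q q' : ℚ, a ≤ q ∧ (q' : ℝ) ≤ b ∧ x ∈ mSeg G d q q' := by
  obtain ⟨t, ht, hat, htb, rfl⟩ := hx
  obtain ⟨q, haq, hqt⟩ := exists_rat_btwn hat
  obtain ⟨q', htq', hq'b⟩ := exists_rat_btwn htb
  exact ⟨q, q', haq.le, hq'b.le, t, ht, hqt, htq', rfl⟩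

lemma exists_rat_mem_mStar {v : V} {ε : ℝ} (hε : 0 < ε) {x : MSpace G}
    (hx : x ∈ mStar G v ε) : ∃ q : ℚ, 0 < q ∧ (q : ℝ) ≤ ε ∧ x ∈ mStar G v q := by
  rcases hx with rfl | ⟨d, t, ht, hd, htε, rfl⟩
  · obtain ⟨q, hq, hqε⟩ := exists_rat_btwn hε
    exact ⟨q, by exact_mod_cast hq, hqε.le, Set.mem_insert _ _⟩
  · obtain ⟨q, htq, hqε⟩ := exists_rat_btwn htε
    exact ⟨q, by exact_mod_cast ht.1.trans htq, hqε.le, .inr ⟨d, t, ht, hd, htq, rfl⟩⟩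

lemma exists_rat_mem_mEndNbhd {X : Finset V} {C : G.ComponentCompl (X : Set V)} {ε : ℝ}
    (hε : 0 < ε) {x : MSpace G} (hx : x ∈ mEndNbhd G X C ε) :
    ∃ q : ℚ, 0 < q ∧ (q : ℝ) ≤ ε ∧ x ∈ mEndNbhd G X C q := by
  obtain ⟨q₀, hq₀, hq₀ε⟩ := exists_rat_btwn hε
  rcases hx with (hx | hx) | ⟨d, t, ht, h₁, h₂ | htε, rfl⟩
  · exact ⟨q₀, by exact_mod_cast hq₀, hq₀ε.le, .inl (.inl hx)⟩
  · exact ⟨q₀, by exact_mod_cast hq₀, hq₀ε.le, .inl (.inr hx)⟩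
  · exact ⟨q₀, by exact_mod_cast hq₀, hq₀ε.le, .inr ⟨d, t, ht, h₁, .inl h₂, rfl⟩⟩
  · obtain ⟨q, htq, hqε⟩ := exists_rat_btwn htε
    exact ⟨q, by exact_mod_cast ht.1.trans htq, hqε.le, .inr ⟨d, t, ht, h₁, .inr htq, rfl⟩⟩

variable (G) in
def ratBasicSets : Set (Set (MSpace G)) :=
  Set.range (fun p : G.Dart × ℚ × ℚ => mSeg G p.1 p.2.1 p.2.2) ∪
  Set.range (fun p : V × {q : ℚ // 0 < q} => mStar G p.1 p.2) ∪
  Set.range (fun p : (Σ X : Finset V, G.ComponentCompl (X : Set V)) × {q : ℚ // 0 < q} =>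
    mEndNbhd G p.1.1 p.1.2 p.2)

lemma countable_ratBasicSets [Countable V] : (ratBasicSets G).Countable := by
  have : Countable G.Dart := Dart.toProd_injective.countable
  have (X : Finset V) : Countable (G.ComponentCompl (X : Set V)) :=
    inferInstanceAs (Countable (Quot _))
  exact ((Set.countable_range _).union (Set.countable_range _)).union (Set.countable_range _)

lemma mTop_eq_generateFrom_ratBasicSets : mTop G = generateFrom (ratBasicSets G) := by
  refine le_antisymm (le_generateFrom_iff_subset_isOpen.2 ?_)
    (le_generateFrom_iff_subset_isOpen.2 ?_)
  · rintro _ ((⟨⟨d, a, b⟩, rfl⟩ | ⟨⟨v, q, hq⟩, rfl⟩) | ⟨⟨⟨X, C⟩, q, hq⟩, rfl⟩)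
    · exact isOpen_mSeg d a b
    · exact isOpen_mStar v (by exact_mod_cast hq)
    · exact isOpen_mEndNbhd X C (by exact_mod_cast hq)
  · rintro _ ((⟨d, a, b, rfl⟩ | ⟨v, ε, hε, rfl⟩) | ⟨X, C, ε, hε, rfl⟩) <;>
      refine (@isOpen_iff_forall_mem_open _ (generateFrom (ratBasicSets G))).2 fun x hx => ?_
    · obtain ⟨q, q', hq, hq', hx⟩ := exists_rat_mem_mSeg hx
      exact ⟨_, mSeg_subset_mSeg d hq hq', .basic _ (.inl (.inl ⟨(d, q, q'), rfl⟩)), hx⟩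
    · obtain ⟨q, hq, hqε, hx⟩ := exists_rat_mem_mStar hε hx
      exact ⟨_, mStar_mono v hqε, .basic _ (.inl (.inr ⟨(v, ⟨q, hq⟩), rfl⟩)), hx⟩
    · obtain ⟨q, hq, hqε, hx⟩ := exists_rat_mem_mEndNbhd hε hx
      exact ⟨_, mEndNbhd_mono X C hqε, .basic _ (.inr ⟨(⟨X, C⟩, ⟨q, hq⟩), rfl⟩), hx⟩

theorem secondCountableTopology_of_countable [Countable V] : SecondCountableTopology (MSpace G) :=
  ⟨⟨ratBasicSets G, countable_ratBasicSets, mTop_eq_generateFrom_ratBasicSets⟩⟩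

end MSpace

theorem stmt_19_general {V : Type u} (G : SimpleGraph V) :
    SecondCountableTopology (MSpace G) ↔ Countable V :=
  ⟨fun _ => MSpace.countable_of_secondCountableTopology (G := G),
    fun _ => MSpace.secondCountableTopology_of_countable⟩

/-- For a connected graph `G`, the space `|G|` with MTop is second countable
iff the vertex set of `G` is countable. -/
theorem stmt_19 {V : Type u} (G : SimpleGraph V) (hG : G.Connected) :
    SecondCountableTopology (MSpace G) ↔ Countable V :=
  stmt_19_general G
end
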